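/- Corollary 3.4(b). Assume the block Jacobi operator J is self-adjoint and bounded from below, that ‖A_k‖_{B(K)} → ∞ as k → ∞, that ker A_k = {0} for every k ∈ ℕ, and let b ∈ ℝ be such that there exists a compact self-adjoint operator K₀ on H with ⟨(J−K₀)u,u⟩ ≥ b‖u‖² for all u ∈ dom J (i.e. the essential spectrum of J lies in [b,∞)). Fix ε ∈ (0,1). If λ < b is a real eigenvalue of J with eigenvector u ∈ dom J, Ju = λu, normalized so that ‖u‖ = 1, then there is a constant C_b, independent of m, such that ‖u_m‖_K ≤ C_b·exp(−(1−ε)·√(b−λ)·Σ_{k=1}^{m−1} 1/√(‖A_k‖_{B(K)})) for all m ∈ ℕ. -/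

import Mathlib

noncomputable section

open scoped InnerProductSpace ENNReal

/-- The function `ψ(x) = x² eˣ`. -/
def psiFun (x : ℝ) : ℝ := x ^ 2 * Real.exp x

/-- The inverse function of `ψ` on `[0,∞)`. -/
def psiInv (t : ℝ) : ℝ := sInf {x : ℝ | 0 ≤ x ∧ psiFun x = t}

/-- The function `φ_δ`: `1/√δ` on `[0,δ)` and `1/√x` on `[δ,∞)`. -/
def phiFun (δ x : ℝ) : ℝ := if x < δ then 1 / Real.sqrt δ else 1 / Real.sqrt x

/-- `γ(λ) = √δ · ψ⁻¹((b − Re λ)(1−ε)/δ)`. -/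
def gammaFun (δ ε b relam : ℝ) : ℝ := Real.sqrt δ * psiInv ((b - relam) * (1 - ε) / δ)

variable {K : Type*} [NormedAddCommGroup K] [InnerProductSpace ℂ K] [CompleteSpace K]

/-- A sequence in `ℓ²(ℕ,K)` is finitely supported. -/
def IsFinSupp (u : lp (fun _ : ℕ => K) 2) : Prop := Set.Finite {n | u n ≠ 0}

/-- The formal block Jacobi action (indices starting at `0`):
`(Υu)₀ = B₀u₀ + A₀u₁` and `(Υu)_{k+1} = A*_k u_k + B_{k+1} u_{k+1} + A_{k+1} u_{k+2}`. -/
def jacApply (A B : ℕ → K →L[ℂ] K) (v : ℕ → K) : ℕ → K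
  | 0 => B 0 (v 0) + A 0 (v 1)
  | k + 1 =>
      ContinuousLinearMap.adjoint (A k) (v k) + B (k + 1) (v (k + 1)) + A (k + 1) (v (k + 2))

/-- `J` is the block Jacobi operator with entries `A`, `B`: every finitely supported sequence
belongs to its domain, it acts on those by the block Jacobi difference expression, and it is
the closure of its restriction to the finitely supported sequences (i.e. its graph is contained
in the closure of the graph of `J₀`). -/
structure IsBlockJacobi (J : lp (fun _ : ℕ => K) 2 →ₗ.[ℂ] lp (fun _ : ℕ => K) 2)
    (A B : ℕ → K →L[ℂ] K) : Prop where
  dom_fin : ∀ u : lp (fun _ : ℕ => K) 2, IsFinSupp u → u ∈ J.domain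
  apply_fin : ∀ (u : lp (fun _ : ℕ => K) 2) (hu : u ∈ J.domain), IsFinSupp u →
    ∀ n, (J ⟨u, hu⟩) n = jacApply A B (fun m => u m) n
  isClosure : ∀ u : J.domain, ((u : lp (fun _ : ℕ => K) 2), J u) ∈
    closure {p : lp (fun _ : ℕ => K) 2 × lp (fun _ : ℕ => K) 2 |
      ∃ h1 : p.1 ∈ J.domain, IsFinSupp p.1 ∧ J ⟨p.1, h1⟩ = p.2}

/-- `R` is an everywhere-defined bounded inverse of `J − λI`; the existence of such an `R`
says precisely that `λ ∉ σ(J)`. -/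
def IsResolventAt (J : lp (fun _ : ℕ => K) 2 →ₗ.[ℂ] lp (fun _ : ℕ => K) 2) (lam : ℂ)
    (R : lp (fun _ : ℕ => K) 2 →L[ℂ] lp (fun _ : ℕ => K) 2) : Prop :=
  (∀ u : J.domain, R (J u - lam • (u : lp (fun _ : ℕ => K) 2)) = u) ∧
  (∀ v : lp (fun _ : ℕ => K) 2, ∃ hv : R v ∈ J.domain, J ⟨R v, hv⟩ - lam • (R v) = v)

/-- `J` is bounded from below. -/
def IsBoundedBelowOp (J : lp (fun _ : ℕ => K) 2 →ₗ.[ℂ] lp (fun _ : ℕ => K) 2) : Prop :=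
  ∃ c : ℝ, ∀ u : J.domain,
    c * ‖(u : lp (fun _ : ℕ => K) 2)‖ ^ 2 ≤ (⟪J u, (u : lp (fun _ : ℕ => K) 2)⟫_ℂ).re

/-- The essential spectrum of `J` lies in `[b,∞)`: there is a compact self-adjoint operator `K₀`
with `⟨(J−K₀)u,u⟩ ≥ b‖u‖²` on the domain of `J`. -/
def EssSpecFrom (J : lp (fun _ : ℕ => K) 2 →ₗ.[ℂ] lp (fun _ : ℕ => K) 2) (b : ℝ) : Prop :=
  ∃ K₀ : lp (fun _ : ℕ => K) 2 →L[ℂ] lp (fun _ : ℕ => K) 2,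
    IsCompactOperator K₀ ∧ IsSelfAdjoint K₀ ∧
    ∀ u : J.domain, b * ‖(u : lp (fun _ : ℕ => K) 2)‖ ^ 2 ≤
      (⟪J u - K₀ (u : lp (fun _ : ℕ => K) 2), (u : lp (fun _ : ℕ => K) 2)⟫_ℂ).re

/-!
Agmon-type argument. Let `t k = ‖A k‖^{-1/2}` and `γ = (1 - ε)√(b - λ)`, so `γ² < b - λ`.
Take the weight `w k = exp (γ ∑_{M ≤ j < min k N} t j)`, which is `1` up to `M` and
constant from `N` on; then `w u` is a finitely supported modification of a multiple of `u`, hence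
lies in the domain of `J`. Because `J u = λ u`, the form `⟪(J - λ)(w u), w u⟫` only sees the
commutator of `J` with `w`, namely `-∑ (w_{k+1} - w_k)² Re⟪A_k u_{k+1}, u_k⟫`; since
`(w_{k+1} - w_k)² ‖A_k‖ ≤ γ² e^{γ t_k} w_k w_{k+1}` and `t_k → 0`, this is at most
`(γ² + δ)‖w u‖²` once `M` is large. On the other hand, the compact perturbation `K₀` is small on
the tail `k ≥ M`, so `⟪(J - λ) v, v⟫ ≥ (b - λ - δ)‖v‖² - C ‖u‖ ‖v‖` for every `v` in the domain
agreeing with `u` below `M`. Together these bound `‖w u‖`, hence `e^{γ ∑_{M ≤ j < N} t j} ‖u_N‖`,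
uniformly in `N`.
-/

open Filter Topology

theorem Real.exp_sub_one_le_mul_exp (s : ℝ) : Real.exp s - 1 ≤ s * Real.exp s := by
  have h := Real.add_one_le_exp (-s)
  have h1 : Real.exp (-s) * Real.exp s = 1 := by rw [← Real.exp_add, neg_add_cancel, Real.exp_zero]
  nlinarith [Real.exp_pos s]

theorem sq_mul_exp_sub_self_le (a : ℝ) {s : ℝ} (hs : 0 ≤ s) :
    (a * Real.exp s - a) ^ 2 ≤ s ^ 2 * Real.exp s * (a * (a * Real.exp s)) := by
  have h0 : 0 ≤ Real.exp s - 1 := by linarith [Real.add_one_le_exp s]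
  have h1 : (Real.exp s - 1) ^ 2 ≤ (s * Real.exp s) ^ 2 :=
    pow_le_pow_left₀ h0 (Real.exp_sub_one_le_mul_exp s) 2
  calc (a * Real.exp s - a) ^ 2 = a ^ 2 * (Real.exp s - 1) ^ 2 := by ring
    _ ≤ a ^ 2 * (s * Real.exp s) ^ 2 := by gcongr
    _ = s ^ 2 * Real.exp s * (a * (a * Real.exp s)) := by ring

-- `≤` rather than `=` because of `x ≤ 0`, where `1 / √x = 1 / 0 = 0`.
theorem mul_one_div_sqrt_sq_mul_le (c x : ℝ) : (c * (1 / Real.sqrt x)) ^ 2 * x ≤ c ^ 2 := by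
  rcases le_or_gt x 0 with hx | hx
  · simp [Real.sqrt_eq_zero'.2 hx, sq_nonneg]
  · rw [mul_pow, div_pow, one_pow, Real.sq_sqrt hx.le, mul_assoc, one_div_mul_cancel hx.ne',
      mul_one]

theorem Finset.sum_range_le_sum_range_add_sum_Ico {s : ℕ → ℝ} (hs : ∀ j, 0 ≤ s j) (M N : ℕ) :
    ∑ j ∈ Finset.range N, s j ≤ ∑ j ∈ Finset.range M, s j + ∑ j ∈ Finset.Ico M N, s j := by
  rcases le_total M N with h | h
  · rw [Finset.sum_range_add_sum_Ico s h]
  · rw [Finset.Ico_eq_empty_of_le h, Finset.sum_empty, add_zero]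
    exact Finset.sum_le_sum_of_subset_of_nonneg (Finset.range_subset_range.2 h)
      fun j _ _ => hs j

theorem eventually_mul_exp_mul_one_div_sqrt_le {a : ℕ → ℝ} (ha : Tendsto a atTop atTop)
    {c κ : ℝ} (hc : c < κ) (γ : ℝ) :
    ∀ᶠ k in atTop, c * Real.exp (γ * (1 / Real.sqrt (a k))) ≤ κ := by
  have ht := ((tendsto_const_nhds (x := (1 : ℝ))).div_atTop
    (Real.tendsto_sqrt_atTop.comp ha)).const_mul γ
  rw [mul_zero] at ht
  have hexp := ((Real.continuous_exp.tendsto 0).comp ht).const_mul c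
  rw [Real.exp_zero, mul_one] at hexp
  exact hexp.eventually_le_const hc

def truncExpWeight (s : ℕ → ℝ) (M N k : ℕ) : ℝ := Real.exp (∑ j ∈ Finset.Ico M (min k N), s j)

section truncExpWeight

variable {s : ℕ → ℝ} {M N k : ℕ}

theorem truncExpWeight_pos : 0 < truncExpWeight s M N k := Real.exp_pos _

theorem truncExpWeight_of_le (hk : k ≤ M) : truncExpWeight s M N k = 1 := by
  rw [truncExpWeight, Finset.Ico_eq_empty_of_le (by omega), Finset.sum_empty, Real.exp_zero]

theorem truncExpWeight_of_ge (hk : N ≤ k) : truncExpWeight s M N k = truncExpWeight s M N N := by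
  simp only [truncExpWeight, min_eq_right hk, min_self]

theorem truncExpWeight_succ_of_mem (hk : k ∈ Finset.Ico M N) :
    truncExpWeight s M N (k + 1) = truncExpWeight s M N k * Real.exp (s k) := by
  rw [Finset.mem_Ico] at hk
  rw [truncExpWeight, truncExpWeight, min_eq_left (by omega : k + 1 ≤ N),
    min_eq_left hk.2.le, Finset.sum_Ico_succ_top hk.1, Real.exp_add]

theorem truncExpWeight_succ_of_notMem (hk : k ∉ Finset.Ico M N) :
    truncExpWeight s M N (k + 1) = truncExpWeight s M N k := by
  rcases not_and_or.1 (Finset.mem_Ico.not.1 hk) with hk | hk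
  · rw [truncExpWeight_of_le (by omega), truncExpWeight_of_le (by omega)]
  · rw [truncExpWeight_of_ge (k := k + 1) (by omega), truncExpWeight_of_ge (k := k) (by omega)]

theorem sq_truncExpWeight_succ_sub_mul_le {a : ℕ → ℝ} {κ : ℝ} (ha : ∀ k, 0 ≤ a k) (hκ : 0 ≤ κ)
    (hs : ∀ k, M ≤ k → 0 ≤ s k ∧ s k ^ 2 * a k * Real.exp (s k) ≤ κ) (k : ℕ) :
    (truncExpWeight s M N (k + 1) - truncExpWeight s M N k) ^ 2 * a k ≤
      κ * (truncExpWeight s M N k * truncExpWeight s M N (k + 1)) := by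
  by_cases hk : k ∈ Finset.Ico M N
  · obtain ⟨hs0, hsκ⟩ := hs k (Finset.mem_Ico.1 hk).1
    rw [truncExpWeight_succ_of_mem hk]
    calc _ ≤ s k ^ 2 * Real.exp (s k) * (truncExpWeight s M N k *
            (truncExpWeight s M N k * Real.exp (s k))) * a k :=
          mul_le_mul_of_nonneg_right (sq_mul_exp_sub_self_le _ hs0) (ha k)
      _ = s k ^ 2 * a k * Real.exp (s k) * (truncExpWeight s M N k *
            (truncExpWeight s M N k * Real.exp (s k))) := by ring
      _ ≤ _ := mul_le_mul_of_nonneg_right hsκ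
          (mul_pos truncExpWeight_pos (mul_pos truncExpWeight_pos (Real.exp_pos _))).le
  · rw [truncExpWeight_succ_of_notMem hk, sub_self, zero_pow two_ne_zero, zero_mul]
    exact mul_nonneg hκ (mul_pos truncExpWeight_pos truncExpWeight_pos).le

theorem exp_sum_range_le_mul_truncExpWeight (hs : ∀ j, 0 ≤ s j) :
    Real.exp (∑ j ∈ Finset.range N, s j) ≤
      Real.exp (∑ j ∈ Finset.range M, s j) * truncExpWeight s M N N := by
  rw [truncExpWeight, min_self, ← Real.exp_add, Real.exp_le_exp]
  exact Finset.sum_range_le_sum_range_add_sum_Ico hs M N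

end truncExpWeight

theorem IsCompactOperator.tendsto_comp_of_tendsto_apply {𝕜 E F G ι : Type*} [RCLike 𝕜]
    [NormedAddCommGroup E] [NormedSpace 𝕜 E] [NormedAddCommGroup F] [NormedSpace 𝕜 F]
    [NormedAddCommGroup G] [NormedSpace 𝕜 G] {l : Filter ι} {T : E →L[𝕜] F}
    (hT : IsCompactOperator T) {Q : ι → F →L[𝕜] G} {c : ℝ} (hQ : ∀ i, ‖Q i‖ ≤ c)
    (hQ0 : ∀ y, Tendsto (fun i => Q i y) l (𝓝 0)) :
    Tendsto (fun i => (Q i).comp T) l (𝓝 0) := by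
  rw [Metric.tendsto_nhds]
  intro η hη
  obtain ⟨S, hS, hTS⟩ := hT.image_closedBall_subset_compact 1
  have hc : 0 < |c| + 1 := by positivity
  set ρ := η / (4 * (|c| + 1))
  obtain ⟨net, hnet, hcover⟩ :=
    Metric.totallyBounded_iff.1 hS.totallyBounded ρ (by positivity)
  have hsmall : ∀ᶠ i in l, ∀ y ∈ net, ‖Q i y‖ < η / 2 :=
    (Filter.eventually_all_finite hnet).2 fun y _ => by
      simpa using Metric.tendsto_nhds.1 (hQ0 y) (η / 2) (by positivity)
  filter_upwards [hsmall] with i hi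
  rw [dist_zero_right]
  refine lt_of_le_of_lt (ContinuousLinearMap.opNorm_le_of_unit_norm (C := 3 * η / 4)
    (by positivity) fun x hx => ?_) (by linarith)
  obtain ⟨y, hy, hxy⟩ := Set.mem_iUnion₂.1
    (hcover (hTS ⟨x, by simp [hx], rfl⟩))
  have hQxy : ‖Q i (T x - y)‖ ≤ (|c| + 1) * ρ := by
    calc ‖Q i (T x - y)‖ ≤ c * ‖T x - y‖ :=
          (Q i).le_opNorm _ |>.trans (mul_le_mul_of_nonneg_right (hQ i) (norm_nonneg _))
      _ ≤ (|c| + 1) * ρ := by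
          rw [← dist_eq_norm]
          exact mul_le_mul (by linarith [le_abs_self c]) (Metric.mem_ball.1 hxy).le
            dist_nonneg hc.le
  calc ‖((Q i).comp T) x‖ = ‖Q i (T x - y) + Q i y‖ := by simp
    _ ≤ ‖Q i (T x - y)‖ + ‖Q i y‖ := norm_add_le _ _
    _ ≤ (|c| + 1) * ρ + η / 2 := add_le_add hQxy (hi y hy).le
    _ = 3 * η / 4 := by simp only [ρ]; field_simp; ring

section

variable {E : Type*} [NormedAddCommGroup E] [InnerProductSpace ℂ E]

theorem re_inner_ofReal_smul_left (r : ℝ) (x y : E) :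
    (⟪(r : ℂ) • x, y⟫_ℂ).re = r * (⟪x, y⟫_ℂ).re := by
  rw [inner_smul_left, Complex.conj_ofReal, Complex.re_ofReal_mul]

theorem re_inner_ofReal_smul_right (r : ℝ) (x y : E) :
    (⟪x, (r : ℂ) • y⟫_ℂ).re = r * (⟪x, y⟫_ℂ).re := by
  rw [inner_smul_right, Complex.re_ofReal_mul]

end

namespace lp

variable (𝕜 : Type*) {E : Type*} [RCLike 𝕜] [NormedAddCommGroup E] [InnerProductSpace 𝕜 E]

def headProj (M : ℕ) : lp (fun _ : ℕ => E) 2 →L[𝕜] lp (fun _ : ℕ => E) 2 :=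
  ∑ i ∈ Finset.range M,
    (singleContinuousLinearMap 𝕜 (fun _ => E) 2 i).comp (evalCLM 𝕜 (fun _ => E) 2 i)

def tailProj (M : ℕ) : lp (fun _ : ℕ => E) 2 →L[𝕜] lp (fun _ : ℕ => E) 2 :=
  ContinuousLinearMap.id 𝕜 _ - headProj 𝕜 M

variable {𝕜}

theorem headProj_apply (M : ℕ) (y : lp (fun _ : ℕ => E) 2) (j : ℕ) :
    headProj 𝕜 M y j = if j < M then y j else 0 := by
  classical
  have h : headProj 𝕜 M y = ∑ i ∈ Finset.range M, lp.single 2 i (y i) := by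
    simp [headProj, evalCLM]
  rw [h]
  simp only [lp.coeFn_sum, Finset.sum_apply, lp.coeFn_single, Finset.sum_pi_single,
    Finset.mem_range]

theorem tailProj_apply (M : ℕ) (y : lp (fun _ : ℕ => E) 2) (j : ℕ) :
    tailProj 𝕜 M y j = if j < M then 0 else y j := by
  simp only [tailProj, FunLike.coe_sub, ContinuousLinearMap.coe_id', Pi.sub_apply,
    id_eq, lp.coeFn_sub, headProj_apply]
  split_ifs <;> simp

theorem headProj_add_tailProj (M : ℕ) (y : lp (fun _ : ℕ => E) 2) :
    headProj 𝕜 M y + tailProj 𝕜 M y = y := by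
  simp [tailProj]

theorem headProj_congr {M : ℕ} {x y : lp (fun _ : ℕ => E) 2} (h : ∀ j < M, x j = y j) :
    headProj 𝕜 M x = headProj 𝕜 M y :=
  lp.ext <| funext fun j => by
    simp only [headProj_apply]
    split_ifs with hj
    exacts [h j hj, rfl]

theorem norm_headProj_le (M : ℕ) (y : lp (fun _ : ℕ => E) 2) : ‖headProj 𝕜 M y‖ ≤ ‖y‖ :=
  lp.norm_mono two_ne_zero fun j => by
    rw [headProj_apply]; split_ifs <;> simp

theorem norm_tailProj_le (M : ℕ) (y : lp (fun _ : ℕ => E) 2) : ‖tailProj 𝕜 M y‖ ≤ ‖y‖ :=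
  lp.norm_mono two_ne_zero fun j => by
    rw [tailProj_apply]; split_ifs <;> simp

theorem opNorm_tailProj_le (M : ℕ) : ‖(tailProj 𝕜 M : lp (fun _ : ℕ => E) 2 →L[𝕜] _)‖ ≤ 1 :=
  ContinuousLinearMap.opNorm_le_bound _ zero_le_one fun y => by
    rw [one_mul]; exact norm_tailProj_le M y

theorem tendsto_tailProj (y : lp (fun _ : ℕ => E) 2) :
    Tendsto (fun M => tailProj 𝕜 M y) atTop (𝓝 0) := by
  have h := (lp.hasSum_single (by norm_num : (2 : ℝ≥0∞) ≠ ⊤) y).tendsto_sum_nat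
  have h' := (tendsto_const_nhds (x := y)).sub h
  rw [sub_self] at h'
  refine h'.congr fun M => ?_
  simp [tailProj, headProj, evalCLM]

theorem inner_tailProj_left (M : ℕ) (x y : lp (fun _ : ℕ => E) 2) :
    ⟪tailProj 𝕜 M x, y⟫_𝕜 = ⟪x, tailProj 𝕜 M y⟫_𝕜 := by
  simp only [lp.inner_eq_tsum, tailProj_apply]
  congr 1; funext j
  split_ifs <;> simp

theorem hasSum_norm_sq (y : lp (fun _ : ℕ => E) 2) : HasSum (fun i => ‖y i‖ ^ 2) (‖y‖ ^ 2) := by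
  simpa using lp.hasSum_norm (p := 2) (by norm_num) y

theorem sum_norm_mul_norm_succ_le (y : lp (fun _ : ℕ => E) 2) (N : ℕ) :
    ∑ k ∈ Finset.range N, ‖y k‖ * ‖y (k + 1)‖ ≤ ‖y‖ ^ 2 := by
  have h0 := sum_le_hasSum (Finset.range N) (fun i _ => sq_nonneg _) (hasSum_norm_sq y)
  have h1 := sum_le_hasSum (Finset.range (N + 1)) (fun i _ => sq_nonneg _) (hasSum_norm_sq y)
  rw [Finset.sum_range_succ'] at h1
  have h2 : ∑ k ∈ Finset.range N, ‖y k‖ * ‖y (k + 1)‖ ≤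
      ∑ k ∈ Finset.range N, (‖y k‖ ^ 2 + ‖y (k + 1)‖ ^ 2) / 2 :=
    Finset.sum_le_sum fun k _ => by nlinarith [sq_nonneg (‖y k‖ - ‖y (k + 1)‖)]
  rw [← Finset.sum_div, Finset.sum_add_distrib] at h2
  linarith [sq_nonneg ‖y 0‖]

end lp

theorem neg_sum_sq_sub_mul_re_inner_le {E : Type*} [NormedAddCommGroup E] [InnerProductSpace ℂ E]
    {A : ℕ → E →L[ℂ] E} {w : ℕ → ℝ} {κ : ℝ} (hκ : 0 ≤ κ)
    (hstep : ∀ k, (w (k + 1) - w k) ^ 2 * ‖A k‖ ≤ κ * (w k * w (k + 1)))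
    {x : ℕ → E} {y : lp (fun _ : ℕ => E) 2} (hy : ∀ m, y m = (w m : ℂ) • x m) (N : ℕ) :
    -∑ k ∈ Finset.range N, (w (k + 1) - w k) ^ 2 * (⟪A k (x (k + 1)), x k⟫_ℂ).re ≤
      κ * ‖y‖ ^ 2 := by
  have hterm : ∀ k, -((w (k + 1) - w k) ^ 2 * (⟪A k (x (k + 1)), x k⟫_ℂ).re) ≤
      κ * (‖y k‖ * ‖y (k + 1)‖) := by
    intro k
    have hre : -(⟪A k (x (k + 1)), x k⟫_ℂ).re ≤ ‖A k‖ * (‖x k‖ * ‖x (k + 1)‖) := by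
      refine neg_le.2 (neg_le_of_abs_le ((Complex.abs_re_le_norm _).trans ?_))
      calc _ ≤ ‖A k (x (k + 1))‖ * ‖x k‖ := norm_inner_le_norm _ _
        _ ≤ ‖A k‖ * ‖x (k + 1)‖ * ‖x k‖ := by gcongr; exact (A k).le_opNorm _
        _ = _ := by ring
    have hy' : ‖y k‖ * ‖y (k + 1)‖ = |w k| * |w (k + 1)| * (‖x k‖ * ‖x (k + 1)‖) := by
      rw [hy, hy, norm_smul, norm_smul, Complex.norm_real, Complex.norm_real, Real.norm_eq_abs,
        Real.norm_eq_abs]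
      ring
    have hw : w k * w (k + 1) ≤ |w k| * |w (k + 1)| := by
      rw [← abs_mul]; exact le_abs_self _
    calc -((w (k + 1) - w k) ^ 2 * (⟪A k (x (k + 1)), x k⟫_ℂ).re)
        ≤ (w (k + 1) - w k) ^ 2 * (‖A k‖ * (‖x k‖ * ‖x (k + 1)‖)) := by
          rw [← mul_neg]; gcongr
      _ = (w (k + 1) - w k) ^ 2 * ‖A k‖ * (‖x k‖ * ‖x (k + 1)‖) := by ring
      _ ≤ κ * (w k * w (k + 1)) * (‖x k‖ * ‖x (k + 1)‖) :=
          mul_le_mul_of_nonneg_right (hstep k) (by positivity)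
      _ ≤ κ * (|w k| * |w (k + 1)|) * (‖x k‖ * ‖x (k + 1)‖) := by gcongr
      _ = κ * (‖y k‖ * ‖y (k + 1)‖) := by rw [hy']; ring
  rw [← Finset.sum_neg_distrib]
  calc _ ≤ ∑ k ∈ Finset.range N, κ * (‖y k‖ * ‖y (k + 1)‖) := Finset.sum_le_sum fun k _ => hterm k
    _ = κ * ∑ k ∈ Finset.range N, ‖y k‖ * ‖y (k + 1)‖ := (Finset.mul_sum ..).symm
    _ ≤ κ * ‖y‖ ^ 2 := by gcongr; exact lp.sum_norm_mul_norm_succ_le y N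

theorem EssSpecFrom.exists_lower_bound {J : lp (fun _ : ℕ => K) 2 →ₗ.[ℂ] lp (fun _ : ℕ => K) 2}
    {b δ : ℝ} (hess : EssSpecFrom J b) (hδ : 0 < δ) :
    ∃ C, 0 ≤ C ∧ ∀ᶠ M in atTop, ∀ v : J.domain,
      (b - δ) * ‖(v : lp (fun _ : ℕ => K) 2)‖ ^ 2 ≤
        (⟪J v, (v : lp (fun _ : ℕ => K) 2)⟫_ℂ).re +
          C * ‖lp.headProj ℂ M (v : lp (fun _ : ℕ => K) 2)‖ * ‖(v : lp (fun _ : ℕ => K) 2)‖ := by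
  obtain ⟨K₀, hK₀c, hK₀sa, hK₀⟩ := hess
  have htail : Tendsto (fun M => (lp.tailProj ℂ M).comp K₀) atTop (𝓝 0) :=
    hK₀c.tendsto_comp_of_tendsto_apply lp.opNorm_tailProj_le lp.tendsto_tailProj
  refine ⟨‖K₀‖, norm_nonneg _, ?_⟩
  filter_upwards [(tendsto_norm_zero.comp htail).eventually_le_const hδ] with M hM v
  set x : lp (fun _ : ℕ => K) 2 := (v : lp (fun _ : ℕ => K) 2)
  have hsmall : ‖⟪K₀ (lp.tailProj ℂ M x), x⟫_ℂ‖ ≤ δ * ‖x‖ ^ 2 := by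
    have hsymm : ⟪K₀ (lp.tailProj ℂ M x), x⟫_ℂ = ⟪x, lp.tailProj ℂ M (K₀ x)⟫_ℂ := by
      rw [← lp.inner_tailProj_left]; exact hK₀sa.isSymmetric _ _
    have hK : ‖lp.tailProj ℂ M (K₀ x)‖ ≤ δ * ‖x‖ :=
      ((lp.tailProj ℂ M).comp K₀).le_opNorm x |>.trans
        (mul_le_mul_of_nonneg_right hM (norm_nonneg _))
    rw [hsymm]
    calc _ ≤ ‖x‖ * ‖lp.tailProj ℂ M (K₀ x)‖ := norm_inner_le_norm _ _
      _ ≤ ‖x‖ * (δ * ‖x‖) := by gcongr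
      _ = δ * ‖x‖ ^ 2 := by ring
  have hhead : ‖⟪K₀ (lp.headProj ℂ M x), x⟫_ℂ‖ ≤ ‖K₀‖ * ‖lp.headProj ℂ M x‖ * ‖x‖ :=
    (norm_inner_le_norm _ _).trans (mul_le_mul_of_nonneg_right (K₀.le_opNorm _) (norm_nonneg _))
  have hsplit : ⟪J v, x⟫_ℂ = ⟪J v - K₀ x, x⟫_ℂ + ⟪K₀ (lp.headProj ℂ M x), x⟫_ℂ +
      ⟪K₀ (lp.tailProj ℂ M x), x⟫_ℂ := by
    rw [add_assoc, ← inner_add_left, ← map_add, lp.headProj_add_tailProj, ← inner_add_left,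
      sub_add_cancel]
  rw [hsplit, Complex.add_re, Complex.add_re]
  linarith [hK₀ v, neg_le_of_abs_le ((Complex.abs_re_le_norm _).trans hhead),
    neg_le_of_abs_le ((Complex.abs_re_le_norm _).trans hsmall)]

theorem continuous_jacApply (A B : ℕ → K →L[ℂ] K) (n : ℕ) :
    Continuous fun f : lp (fun _ : ℕ => K) 2 => jacApply A B (fun m => f m) n := by
  have hev : ∀ m, Continuous fun f : lp (fun _ : ℕ => K) 2 => f m :=
    fun m => (lp.evalCLM ℂ (fun _ => K) 2 m).continuous
  cases n with
  | zero => exact ((B 0).continuous.comp (hev 0)).add ((A 0).continuous.comp (hev 1))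
  | succ k =>
    exact (((ContinuousLinearMap.adjoint (A k)).continuous.comp (hev k)).add
      ((B (k + 1)).continuous.comp (hev _))).add ((A (k + 1)).continuous.comp (hev _))

def jacComm (A : ℕ → K →L[ℂ] K) (w : ℕ → ℝ) (x : ℕ → K) : ℕ → K
  | 0 => ((w 1 - w 0 : ℝ) : ℂ) • A 0 (x 1)
  | k + 1 => ((w k - w (k + 1) : ℝ) : ℂ) • ContinuousLinearMap.adjoint (A k) (x k) +
      ((w (k + 2) - w (k + 1) : ℝ) : ℂ) • A (k + 1) (x (k + 2))

theorem jacApply_smul_sub_smul_jacApply (A B : ℕ → K →L[ℂ] K) (w : ℕ → ℝ) (x : ℕ → K) (n : ℕ) :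
    jacApply A B (fun m => (w m : ℂ) • x m) n - (w n : ℂ) • jacApply A B x n = jacComm A w x n := by
  cases n <;> simp only [jacApply, jacComm, map_smul] <;> push_cast <;> module

theorem sum_range_re_inner_jacComm (A : ℕ → K →L[ℂ] K) (w : ℕ → ℝ) (x : ℕ → K) (N : ℕ) :
    ∑ n ∈ Finset.range (N + 1), (⟪jacComm A w x n, (w n : ℂ) • x n⟫_ℂ).re =
      -∑ k ∈ Finset.range N, (w (k + 1) - w k) ^ 2 * (⟪A k (x (k + 1)), x k⟫_ℂ).re +
        (w (N + 1) - w N) * w N * (⟪A N (x (N + 1)), x N⟫_ℂ).re := by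
  induction N with
  | zero =>
    simp only [Finset.range_one, Finset.sum_singleton, Finset.range_zero, Finset.sum_empty,
      neg_zero, zero_add, jacComm, re_inner_ofReal_smul_left,
      re_inner_ofReal_smul_right]
    ring
  | succ N ih =>
    have hadj : (⟪ContinuousLinearMap.adjoint (A N) (x N), x (N + 1)⟫_ℂ).re =
        (⟪A N (x (N + 1)), x N⟫_ℂ).re := by
      rw [ContinuousLinearMap.adjoint_inner_left, ← inner_conj_symm, Complex.conj_re]
    rw [Finset.sum_range_succ, ih, Finset.sum_range_succ]
    simp only [jacComm, inner_add_left, Complex.add_re, re_inner_ofReal_smul_left,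
      re_inner_ofReal_smul_right, hadj]
    ring

section BlockJacobi

variable {J : lp (fun _ : ℕ => K) 2 →ₗ.[ℂ] lp (fun _ : ℕ => K) 2} {A B : ℕ → K →L[ℂ] K}

theorem IsBlockJacobi.apply_eq_jacApply (hJ : IsBlockJacobi J A B) (u : J.domain) (n : ℕ) :
    J u n = jacApply A B (fun m => (u : lp (fun _ : ℕ => K) 2) m) n := by
  have hclosed : IsClosed {p : lp (fun _ : ℕ => K) 2 × lp (fun _ : ℕ => K) 2 |
      p.2 n = jacApply A B (fun m => p.1 m) n} :=
    isClosed_eq ((lp.evalCLM ℂ (fun _ => K) 2 n).continuous.comp continuous_snd)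
      ((continuous_jacApply A B n).comp continuous_fst)
  refine closure_minimal ?_ hclosed (hJ.isClosure u)
  rintro p ⟨hx, hfin, hxy⟩
  show p.2 n = _
  rw [← hxy]
  exact hJ.apply_fin p.1 hx hfin n

theorem IsBlockJacobi.exists_mem_domain_apply_eq_smul (hJ : IsBlockJacobi J A B) (u : J.domain)
    {w : ℕ → ℂ} {N : ℕ} (hw : ∀ m, N ≤ m → w m = w N) :
    ∃ v : J.domain, ∀ m, (v : lp (fun _ : ℕ => K) 2) m = w m • (u : lp (fun _ : ℕ => K) 2) m := by
  classical
  set g : lp (fun _ : ℕ => K) 2 :=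
    ∑ i ∈ Finset.range N, lp.single 2 i ((w i - w N) • (u : lp (fun _ : ℕ => K) 2) i)
  have hg : ∀ m, g m = if m < N then (w m - w N) • (u : lp (fun _ : ℕ => K) 2) m else 0 := by
    intro m
    simp only [g, lp.coeFn_sum, Finset.sum_apply, lp.coeFn_single, Finset.sum_pi_single,
      Finset.mem_range]
  have hgfin : IsFinSupp g := (Finset.range N).finite_toSet.subset fun m hm => by
    by_contra h
    exact hm (by rw [hg, if_neg (by simpa using h)])
  refine ⟨⟨w N • (u : lp (fun _ : ℕ => K) 2) + g,
    J.domain.add_mem (J.domain.smul_mem _ u.2) (hJ.dom_fin g hgfin)⟩, fun m => ?_⟩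
  show (w N • (u : lp (fun _ : ℕ => K) 2) + g) m = _
  rw [lp.coeFn_add, Pi.add_apply, lp.coeFn_smul, Pi.smul_apply, hg]
  split_ifs with hm
  · module
  · rw [hw m (not_lt.1 hm), add_zero]

theorem IsBlockJacobi.re_inner_sub_smul_eq_of_eigen (hJ : IsBlockJacobi J A B) {lam : ℝ}
    {u : J.domain} (hu : J u = (lam : ℂ) • (u : lp (fun _ : ℕ => K) 2))
    {w : ℕ → ℝ} {N : ℕ} (hw : ∀ m, N ≤ m → w m = w N)
    {v : J.domain}
    (hv : ∀ m, (v : lp (fun _ : ℕ => K) 2) m = (w m : ℂ) • (u : lp (fun _ : ℕ => K) 2) m) :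
    (⟪J v - (lam : ℂ) • (v : lp (fun _ : ℕ => K) 2), (v : lp (fun _ : ℕ => K) 2)⟫_ℂ).re =
      -∑ k ∈ Finset.range N, (w (k + 1) - w k) ^ 2 *
        (⟪A k ((u : lp (fun _ : ℕ => K) 2) (k + 1)), (u : lp (fun _ : ℕ => K) 2) k⟫_ℂ).re := by
  set x : ℕ → K := fun m => (u : lp (fun _ : ℕ => K) 2) m
  have hcomm : ∀ n, (J v - (lam : ℂ) • (v : lp (fun _ : ℕ => K) 2)) n = jacComm A w x n := by
    intro n
    have hun : jacApply A B x n = (lam : ℂ) • x n := by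
      rw [← hJ.apply_eq_jacApply u n, hu]; rfl
    rw [← jacApply_smul_sub_smul_jacApply A B, hun, ← funext hv, ← hJ.apply_eq_jacApply v n,
      lp.coeFn_sub, Pi.sub_apply, lp.coeFn_smul, Pi.smul_apply, hv, smul_comm]
  have hzero : ∀ n ∉ Finset.range (N + 1), (⟪jacComm A w x n, (w n : ℂ) • x n⟫_ℂ).re = 0 := by
    intro n hn
    obtain ⟨k, rfl⟩ : ∃ k, n = k + 1 := ⟨n - 1, by simp at hn; omega⟩
    simp only [Finset.mem_range] at hn
    simp [jacComm, hw k (by omega), hw (k + 1) (by omega), hw (k + 2) (by omega)]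
  have hsum := Complex.reCLM.hasSum (lp.hasSum_inner (𝕜 := ℂ)
    (J v - (lam : ℂ) • (v : lp (fun _ : ℕ => K) 2)) v)
  simp only [Complex.reCLM_apply, hcomm, hv] at hsum
  rw [hsum.unique (hasSum_sum_of_ne_finset_zero hzero), sum_range_re_inner_jacComm,
    hw (N + 1) (by omega), sub_self, zero_mul, zero_mul, add_zero]

theorem IsBlockJacobi.abs_mul_norm_apply_le_of_eigen (hJ : IsBlockJacobi J A B)
    {lam β κ C : ℝ} {M N : ℕ} (hC : 0 ≤ C) (hκ : 0 ≤ κ) (hβ : lam + κ < β)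
    (hlow : ∀ v : J.domain, β * ‖(v : lp (fun _ : ℕ => K) 2)‖ ^ 2 ≤
      (⟪J v, (v : lp (fun _ : ℕ => K) 2)⟫_ℂ).re +
        C * ‖lp.headProj ℂ M (v : lp (fun _ : ℕ => K) 2)‖ * ‖(v : lp (fun _ : ℕ => K) 2)‖)
    {u : J.domain} (hu : J u = (lam : ℂ) • (u : lp (fun _ : ℕ => K) 2))
    {w : ℕ → ℝ} (hwM : ∀ k, k < M → w k = 1) (hwN : ∀ m, N ≤ m → w m = w N)
    (hstep : ∀ k, (w (k + 1) - w k) ^ 2 * ‖A k‖ ≤ κ * (w k * w (k + 1))) (m : ℕ) :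
    |w m| * ‖(u : lp (fun _ : ℕ => K) 2) m‖ ≤
      C * ‖(u : lp (fun _ : ℕ => K) 2)‖ / (β - lam - κ) := by
  obtain ⟨v, hv⟩ := hJ.exists_mem_domain_apply_eq_smul u (w := fun m => (w m : ℂ)) (N := N)
    fun m hm => by rw [hwN m hm]
  set y : lp (fun _ : ℕ => K) 2 := (v : lp (fun _ : ℕ => K) 2)
  set x : lp (fun _ : ℕ => K) 2 := (u : lp (fun _ : ℕ => K) 2)
  have hform : (⟪J v, y⟫_ℂ).re = (⟪J v - (lam : ℂ) • y, y⟫_ℂ).re + lam * ‖y‖ ^ 2 := by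
    have hyy : (⟪y, y⟫_ℂ).re = ‖y‖ ^ 2 := inner_self_eq_norm_sq (𝕜 := ℂ) y
    rw [inner_sub_left, Complex.sub_re, re_inner_ofReal_smul_left, hyy]
    ring
  have hupper : (⟪J v - (lam : ℂ) • y, y⟫_ℂ).re ≤ κ * ‖y‖ ^ 2 := by
    rw [hJ.re_inner_sub_smul_eq_of_eigen hu hwN hv]
    exact neg_sum_sq_sub_mul_re_inner_le hκ hstep hv N
  have hhead : ‖lp.headProj ℂ M y‖ ≤ ‖x‖ := by
    rw [lp.headProj_congr (y := x) fun j hj => by rw [hv, hwM j hj, Complex.ofReal_one, one_smul]]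
    exact lp.norm_headProj_le M x
  have hquad : (β - lam - κ) * ‖y‖ * ‖y‖ ≤ C * ‖x‖ * ‖y‖ := by
    have := mul_le_mul_of_nonneg_right (mul_le_mul_of_nonneg_left hhead hC) (norm_nonneg y)
    nlinarith [hlow v]
  have hy : ‖y‖ ≤ C * ‖x‖ / (β - lam - κ) := by
    rw [le_div_iff₀ (by linarith), mul_comm]
    rcases (norm_nonneg y).eq_or_lt with h | h
    · rw [← h, mul_zero]; positivity
    · exact le_of_mul_le_mul_right hquad h
  calc |w m| * ‖x m‖ = ‖y m‖ := by rw [hv, norm_smul, Complex.norm_real, Real.norm_eq_abs]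
    _ ≤ ‖y‖ := lp.norm_apply_le_norm two_ne_zero y m
    _ ≤ _ := hy

theorem IsBlockJacobi.norm_apply_le_of_eigen (hJ : IsBlockJacobi J A B)
    {lam β γ κ C : ℝ} {M : ℕ} (hC : 0 ≤ C) (hγ : 0 ≤ γ) (hβ : lam + κ < β)
    (hlow : ∀ v : J.domain, β * ‖(v : lp (fun _ : ℕ => K) 2)‖ ^ 2 ≤
      (⟪J v, (v : lp (fun _ : ℕ => K) 2)⟫_ℂ).re +
        C * ‖lp.headProj ℂ M (v : lp (fun _ : ℕ => K) 2)‖ * ‖(v : lp (fun _ : ℕ => K) 2)‖)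
    (hsmall : ∀ k, M ≤ k → γ ^ 2 * Real.exp (γ * (1 / Real.sqrt ‖A k‖)) ≤ κ)
    {u : J.domain} (hu : J u = (lam : ℂ) • (u : lp (fun _ : ℕ => K) 2)) (N : ℕ) :
    ‖(u : lp (fun _ : ℕ => K) 2) N‖ ≤
      Real.exp (∑ k ∈ Finset.range M, γ * (1 / Real.sqrt ‖A k‖)) *
          (C * ‖(u : lp (fun _ : ℕ => K) 2)‖ / (β - lam - κ)) *
        Real.exp (-γ * ∑ k ∈ Finset.range N, 1 / Real.sqrt ‖A k‖) := by
  set s : ℕ → ℝ := fun k => γ * (1 / Real.sqrt ‖A k‖)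
  have hs : ∀ k, 0 ≤ s k := fun k => mul_nonneg hγ (by positivity)
  have hκ : 0 ≤ κ := (by positivity : (0 : ℝ) ≤ γ ^ 2 * Real.exp (s M)).trans (hsmall M le_rfl)
  set w := truncExpWeight s M N
  have hstep : ∀ k, (w (k + 1) - w k) ^ 2 * ‖A k‖ ≤ κ * (w k * w (k + 1)) :=
    sq_truncExpWeight_succ_sub_mul_le (fun k => norm_nonneg _) hκ fun k hk =>
      ⟨hs k, (mul_le_mul_of_nonneg_right (mul_one_div_sqrt_sq_mul_le _ _)
        (Real.exp_pos _).le).trans (hsmall k hk)⟩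
  have hdecay := hJ.abs_mul_norm_apply_le_of_eigen hC hκ hβ hlow hu
    (fun k hk => truncExpWeight_of_le hk.le) (fun m hm => truncExpWeight_of_ge hm) hstep N
  rw [abs_of_pos truncExpWeight_pos] at hdecay
  rw [neg_mul, Finset.mul_sum, Real.exp_neg, ← div_eq_mul_inv, le_div_iff₀ (Real.exp_pos _)]
  calc _ ≤ ‖(u : lp (fun _ : ℕ => K) 2) N‖ * (Real.exp (∑ k ∈ Finset.range M, s k) * w N) := by
        gcongr; exact exp_sum_range_le_mul_truncExpWeight hs
    _ = Real.exp (∑ k ∈ Finset.range M, s k) * (w N * ‖(u : lp (fun _ : ℕ => K) 2) N‖) := by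
        ring
    _ ≤ _ := mul_le_mul_of_nonneg_left hdecay (Real.exp_pos _).le

end BlockJacobi

theorem eigenvector_decay_norm_tendsto_atTop_general
    (A B : ℕ → K →L[ℂ] K)
    (J : lp (fun _ : ℕ => K) 2 →ₗ.[ℂ] lp (fun _ : ℕ => K) 2)
    (hJ : IsBlockJacobi J A B)
    (hA : Filter.Tendsto (fun k => ‖A k‖) Filter.atTop Filter.atTop)
    (b : ℝ) (hess : EssSpecFrom J b)
    (ε : ℝ) (hε : ε ∈ Set.Ioo (0 : ℝ) 1)
    (lam : ℝ) (hlam : lam < b)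
    (u : J.domain) (hu : J u = (lam : ℂ) • (u : lp (fun _ : ℕ => K) 2)) :
    ∃ C : ℝ, ∀ m : ℕ,
      ‖(u : lp (fun _ : ℕ => K) 2) m‖ ≤
        C * Real.exp (-((1 - ε) * Real.sqrt (b - lam)) *
            ∑ k ∈ Finset.range m, 1 / Real.sqrt ‖A k‖) := by
  set γ := (1 - ε) * Real.sqrt (b - lam)
  have hγ : 0 ≤ γ := mul_nonneg (by linarith [hε.2]) (Real.sqrt_nonneg _)
  have hγb : γ ^ 2 < b - lam := by
    rw [mul_pow, Real.sq_sqrt (by linarith)]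
    nlinarith [mul_pos (mul_pos hε.1 (by linarith [hε.2] : 0 < 2 - ε)) (sub_pos.2 hlam)]
  set δ := (b - lam - γ ^ 2) / 3 with hδ_def
  have hδ : 0 < δ := by rw [hδ_def]; linarith
  obtain ⟨C, hC, hlow⟩ := hess.exists_lower_bound hδ
  obtain ⟨M, hlowM, hsmall⟩ := (hlow.and (eventually_forall_ge_atTop.2
    (eventually_mul_exp_mul_one_div_sqrt_le hA (by linarith : γ ^ 2 < γ ^ 2 + δ) γ))).exists
  exact ⟨_, hJ.norm_apply_le_of_eigen hC hγ (by linarith) hlowM hsmall hu⟩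

/-- **Corollary 3.4(b).** Eigenvector decay when `‖A_k‖ → ∞`. -/
theorem eigenvector_decay_norm_tendsto_atTop
    (A B : ℕ → K →L[ℂ] K) (hB : ∀ n, IsSelfAdjoint (B n))
    (hkerA : ∀ m, ∀ x : K, A m x = 0 → x = 0)
    (J : lp (fun _ : ℕ => K) 2 →ₗ.[ℂ] lp (fun _ : ℕ => K) 2)
    (hJ : IsBlockJacobi J A B) (hsa : IsSelfAdjoint J)
    (hbelow : IsBoundedBelowOp J)
    (hA : Filter.Tendsto (fun k => ‖A k‖) Filter.atTop Filter.atTop)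
    (b : ℝ) (hess : EssSpecFrom J b)
    (ε : ℝ) (hε : ε ∈ Set.Ioo (0 : ℝ) 1)
    (lam : ℝ) (hlam : lam < b)
    (u : J.domain) (hu : J u = (lam : ℂ) • (u : lp (fun _ : ℕ => K) 2))
    (hnorm : ‖(u : lp (fun _ : ℕ => K) 2)‖ = 1) :
    ∃ C : ℝ, ∀ m : ℕ,
      ‖(u : lp (fun _ : ℕ => K) 2) m‖ ≤
        C * Real.exp (-((1 - ε) * Real.sqrt (b - lam)) *
            ∑ k ∈ Finset.range m, 1 / Real.sqrt ‖A k‖) :=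
  eigenvector_decay_norm_tendsto_atTop_general A B J hJ hA b hess ε hε lam hlam u hu
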